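/- If a flattened Fubini ranking with runs of (strict) ascents has reduced content (a_1,...,a_k), then a_i ≤ i for all 1 ≤ i ≤ k. In particular a_1 = 1, i.e., the value 1 appears exactly once. -/

import Mathlib

/-- A Fubini ranking of length `n`: entries in `{1,...,n}` and every value `v`
appearing satisfies `v = 1 + #{j : r_j < v}`. -/
def IsFubini (n : ℕ) (l : List ℕ) : Prop :=
  l.length = n ∧ (∀ x ∈ l, 1 ≤ x ∧ x ≤ n) ∧
    ∀ v ∈ l, v = 1 + l.countP (fun x => decide (x < v))

/-- Split a list (with given head) into maximal runs w.r.t. relation `R`. -/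
def runsAux (R : ℕ → ℕ → Bool) : ℕ → List ℕ → List (List ℕ)
  | a, [] => [[a]]
  | a, b :: l =>
    match runsAux R b l with
    | (c :: r) :: rest =>
        if R a b then (a :: c :: r) :: rest else [a] :: (c :: r) :: rest
    | rs => [a] :: rs

/-- The maximal runs of a list with respect to the relation `R`. -/
def runs (R : ℕ → ℕ → Bool) : List ℕ → List (List ℕ)
  | [] => []
  | a :: l => runsAux R a l

/-- Maximal runs of weak ascents. -/
def weakRuns (l : List ℕ) : List (List ℕ) := runs (fun a b => decide (a ≤ b)) l

/-- Maximal runs of strict ascents. -/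
def strictRuns (l : List ℕ) : List (List ℕ) := runs (fun a b => decide (a < b)) l

/-- Leading terms of a list of runs. -/
def leadingTerms (rs : List (List ℕ)) : List ℕ := rs.map List.headI

/-- Weakly flattened w.r.t. runs of weak ascents. -/
def WeaklyFlattenedWeak (l : List ℕ) : Prop :=
  (leadingTerms (weakRuns l)).Chain' (· ≤ ·)

/-- Flattened w.r.t. runs of weak ascents. -/
def FlattenedWeak (l : List ℕ) : Prop :=
  (leadingTerms (weakRuns l)).Chain' (· < ·)

/-- Weakly flattened w.r.t. runs of strict ascents. -/
def WeaklyFlattenedStrict (l : List ℕ) : Prop :=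
  (leadingTerms (strictRuns l)).Chain' (· ≤ ·)

/-- Flattened w.r.t. runs of strict ascents. -/
def FlattenedStrict (l : List ℕ) : Prop :=
  (leadingTerms (strictRuns l)).Chain' (· < ·)

/-- The content `(c_1, ..., c_n)` of a tuple of length `n`: `c_i` is the number
of entries equal to `i`. -/
def content (l : List ℕ) : List ℕ :=
  (List.range l.length).map (fun i => l.count (i + 1))

/-- The reduced content: multiplicities of the distinct values, in increasing
order of the values. -/
def reducedContent (l : List ℕ) : List ℕ :=
  (l.toFinset.sort (· ≤ ·)).map (fun v => l.count v)

/-- `a_1` copies of `1`, then `a_2` copies of `1 + a_1`, etc. (auxiliary). -/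
def stairsAux : ℕ → List ℕ → List ℕ
  | _, [] => []
  | s, c :: rest => List.replicate c (s + 1) ++ stairsAux (s + c) rest

/-- The weakly increasing tuple with reduced content `a`. -/
def stairs (a : List ℕ) : List ℕ := stairsAux 0 a

/-! Cut a flattened tuple into its runs of strict ascents. A run contains each value `v` at
most once, and a run containing `v` starts at a value `≤ v`. The starting values of the runs
increase strictly, so they are distinct; hence `v` occurs at most as often as there are distinct
values `≤ v`, which is `i` for the `i`-th smallest value. In a Fubini ranking the smallest value
has nothing below it, so it is `1`. -/

namespace List

variable {α : Type*}

theorem Pairwise.countP_le_getElem [LinearOrder α] {s : List α} (hs : s.Pairwise (· < ·))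
    (i : ℕ) (hi : i < s.length) : s.countP (· ≤ s[i]) = i + 1 := by
  induction s generalizing i with
  | nil => simp at hi
  | cons x s ih =>
    obtain ⟨hx, hs⟩ := pairwise_cons.mp hs
    cases i with
    | zero =>
      simp only [getElem_cons_zero, countP_cons, le_refl, decide_true, if_true]
      rw [countP_eq_zero.mpr fun y hy => by simpa using hx y hy]
    | succ i =>
      have hi : i < s.length := by simpa using hi
      have hxi : x ≤ s[i] := (hx _ (getElem_mem _)).le
      simp only [getElem_cons_succ, countP_cons, hxi, decide_true, if_true,
        ih hs i hi]

theorem count_flatten_le_length_filter_mem [DecidableEq α] {L : List (List α)}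
    (hL : ∀ c ∈ L, c.Nodup) (v : α) : L.flatten.count v ≤ (L.filter (v ∈ ·)).length := by
  induction L with
  | nil => simp
  | cons c L ih =>
    have hc := nodup_iff_count_le_one.mp (hL c mem_cons_self) v
    have ih := ih fun d hd => hL d (mem_cons_of_mem _ hd)
    by_cases hv : v ∈ c
    · simp only [flatten_cons, count_append, hv, decide_true, filter_cons_of_pos, length_cons]
      omega
    · simp [hv, count_eq_zero_of_not_mem hv, ih]

end List

theorem Finset.card_filter_le_sort_getElem {α : Type*} [LinearOrder α] (s : Finset α) (i : ℕ)
    (hi : i < s.sort.length) : {x ∈ s | x ≤ s.sort[i]}.card = i + 1 := by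
  rw [← s.sortedLT_sort.pairwise.countP_le_getElem i hi, List.countP_eq_length_filter,
    Finset.card_def, Finset.filter_val, ← Finset.sort_eq s (· ≤ ·), Multiset.filter_coe,
    Multiset.coe_card]

section Runs

variable (R : ℕ → ℕ → Bool)

theorem runsAux_cons_of_eq {a b : ℕ} {l t : List ℕ} {rest : List (List ℕ)}
    (h : runsAux R b l = (b :: t) :: rest) :
    runsAux R a (b :: l) =
      if R a b then (a :: b :: t) :: rest else [a] :: (b :: t) :: rest := by
  rw [runsAux, h]

theorem exists_runsAux_eq_cons (a : ℕ) (l : List ℕ) :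
    ∃ t rest, runsAux R a l = (a :: t) :: rest := by
  induction l generalizing a with
  | nil => exact ⟨[], [], rfl⟩
  | cons b l ih =>
    obtain ⟨t, rest, h⟩ := ih b
    rw [runsAux_cons_of_eq R h]
    split_ifs
    exacts [⟨_, _, rfl⟩, ⟨_, _, rfl⟩]

theorem flatten_runsAux (a : ℕ) (l : List ℕ) : (runsAux R a l).flatten = a :: l := by
  induction l generalizing a with
  | nil => rfl
  | cons b l ih =>
    obtain ⟨t, rest, h⟩ := exists_runsAux_eq_cons R b l
    have ih := ih b
    rw [h] at ih
    rw [runsAux_cons_of_eq R h]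
    split_ifs <;> simpa using ih

theorem isChain_of_mem_runsAux (a : ℕ) (l : List ℕ) :
    ∀ c ∈ runsAux R a l, c.IsChain (R · ·) := by
  induction l generalizing a with
  | nil => simp [runsAux]
  | cons b l ih =>
    obtain ⟨t, rest, h⟩ := exists_runsAux_eq_cons R b l
    have ih := ih b
    rw [h] at ih
    rw [runsAux_cons_of_eq R h]
    split_ifs with hab
    · simp only [List.mem_cons, forall_eq_or_imp, List.isChain_cons_cons, hab] at ih ⊢
      exact ⟨⟨trivial, ih.1⟩, ih.2⟩
    · simpa using ih

theorem flatten_runs (l : List ℕ) : (runs R l).flatten = l := by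
  cases l with
  | nil => rfl
  | cons a l => exact flatten_runsAux R a l

theorem isChain_of_mem_runs {l c : List ℕ} (hc : c ∈ runs R l) : c.IsChain (R · ·) := by
  cases l with
  | nil => simp [runs] at hc
  | cons a l => exact isChain_of_mem_runsAux R a l c hc

end Runs

theorem flatten_strictRuns (l : List ℕ) : (strictRuns l).flatten = l :=
  flatten_runs _ l

theorem pairwise_of_mem_strictRuns {l c : List ℕ} (hc : c ∈ strictRuns l) :
    c.Pairwise (· < ·) :=
  List.isChain_iff_pairwise.mp <|
    (isChain_of_mem_runs _ hc).imp fun _ _ h => of_decide_eq_true h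

theorem List.headI_le_of_mem {α : Type*} [Preorder α] [Inhabited α] {c : List α}
    (hc : c.Pairwise (· < ·)) {v : α} (hv : v ∈ c) :
    c.headI ≤ v := by
  obtain _ | ⟨x, c⟩ := c
  · simp at hv
  · rcases List.mem_cons.mp hv with rfl | hv
    · rfl
    · exact (List.rel_of_pairwise_cons hc hv).le

theorem FlattenedStrict.count_le_card_filter_le {l : List ℕ} (hfl : FlattenedStrict l)
    (v : ℕ) : l.count v ≤ {w ∈ l.toFinset | w ≤ v}.card := by
  set F := (strictRuns l).filter (v ∈ ·)
  have hheads : (F.map List.headI).Nodup :=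
    ((List.isChain_iff_pairwise.mp hfl).sublist (List.filter_sublist.map _)).imp ne_of_lt
  have hsub : (F.map List.headI).toFinset ⊆ {w ∈ l.toFinset | w ≤ v} := by
    intro x hx
    obtain ⟨c, hcF, rfl⟩ := List.mem_map.mp (List.mem_toFinset.mp hx)
    obtain ⟨hc, hvc⟩ := List.mem_filter.mp hcF
    have hvc : v ∈ c := by simpa using hvc
    have hhead : c.headI ∈ l := by
      obtain ⟨x, c, rfl⟩ := List.exists_cons_of_ne_nil (List.ne_nil_of_mem hvc)
      rw [← flatten_strictRuns l]
      exact List.mem_flatten_of_mem hc List.mem_cons_self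
    simpa [hhead] using List.headI_le_of_mem (pairwise_of_mem_strictRuns hc) hvc
  calc l.count v = (strictRuns l).flatten.count v := by rw [flatten_strictRuns]
    _ ≤ F.length := List.count_flatten_le_length_filter_mem
        (fun c hc => (pairwise_of_mem_strictRuns hc).nodup) v
    _ = (F.map List.headI).toFinset.card := by
        rw [List.toFinset_card_of_nodup hheads, List.length_map]
    _ ≤ _ := Finset.card_le_card hsub

theorem IsFubini.eq_one_of_forall_le {n : ℕ} {l : List ℕ} (hf : IsFubini n l) {v : ℕ}
    (hv : v ∈ l) (hmin : ∀ w ∈ l, v ≤ w) : v = 1 := by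
  have hnone : l.countP (· < v) = 0 :=
    List.countP_eq_zero.mpr fun w hw => by simpa using hmin w hw
  simpa [hnone] using hf.2.2 v hv

theorem FlattenedStrict.getElem_reducedContent_le {l : List ℕ} (hfl : FlattenedStrict l)
    (i : ℕ) (hi : i < (reducedContent l).length) : (reducedContent l)[i] ≤ i + 1 := by
  simp only [reducedContent, List.getElem_map]
  rw [← Finset.card_filter_le_sort_getElem l.toFinset i]
  exact hfl.count_le_card_filter_le _

theorem flat_runs_reducedContent_le (n : ℕ) (l a : List ℕ)
    (hf : IsFubini n l) (hfl : FlattenedStrict l)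
    (ha : reducedContent l = a) :
    (∀ i (h : i < a.length), a[i] ≤ i + 1) ∧
    (∀ h : 0 < a.length, a[0] = 1 ∧ l.count 1 = 1) := by
  subst ha
  refine ⟨hfl.getElem_reducedContent_le, fun h0 => ?_⟩
  have hne : l.toFinset.Nonempty := by simpa [reducedContent] using h0
  have hmin_mem : l.toFinset.min' hne ∈ l := List.mem_toFinset.mp (l.toFinset.min'_mem hne)
  have hmin_eq : l.toFinset.min' hne = 1 := hf.eq_one_of_forall_le hmin_mem
    fun w hw => l.toFinset.min'_le w (List.mem_toFinset.mpr hw)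
  have hfirst : (reducedContent l)[0] = l.count 1 := by
    simp only [reducedContent, List.getElem_map, Finset.sorted_zero_eq_min', hmin_eq]
  have hcount : l.count 1 = 1 :=
    le_antisymm (hfirst ▸ hfl.getElem_reducedContent_le 0 h0)
      (List.count_pos_iff.mpr (hmin_eq ▸ hmin_mem))
  exact ⟨hfirst.trans hcount, hcount⟩
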